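/- For all n, m ≥ 1, the following are equivalent: (1) every finite system of non-commutative polynomial equations with integer coefficients (in any number of variables) that is solvable in M_n(ℤ) is also solvable in M_m(ℤ); (2) n divides m. -/

import Mathlib

/-!
If `n ∣ m`, say `m = n * q`, then `A ↦ diag(A, …, A)` is a ring embedding `M_n(ℤ) → M_m(ℤ)`,
and ring homomorphisms carry solutions to solutions. Conversely, the relations
`x i j * x k l = δ j k • x i l` and `∑ i, x i i = 1` of a full system of `n × n` matrix units
are solvable in `M_n(ℤ)` by the elementary matrices. In a solution in `M_m(ℤ)` all the
`x i i = x i j * x j i` have the same trace as `x j i * x i j = x j j`, so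
`m = trace 1 = ∑ i, trace (x i i)` is a multiple of `n`.
-/

open Matrix

section Solvability

variable {R : Type*} [CommRing R] {ι σ : Type*}

def IsSolvableIn (A : Type*) [Ring A] [Algebra R A] (P : σ → FreeAlgebra R ι) : Prop :=
  ∃ X : ι → A, ∀ j, FreeAlgebra.lift R X (P j) = 0

theorem FreeAlgebra.algHom_lift_apply {A B : Type*} [Semiring A] [Algebra R A] [Semiring B]
    [Algebra R B] (g : A →ₐ[R] B) (X : ι → A) (p : FreeAlgebra R ι) :
    g (FreeAlgebra.lift R X p) = FreeAlgebra.lift R (g ∘ X) p := by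
  have : g.comp (FreeAlgebra.lift R X) = FreeAlgebra.lift R (g ∘ X) := by
    ext; simp
  exact DFunLike.congr_fun this p

theorem IsSolvableIn.map {A B : Type*} [Ring A] [Algebra R A] [Ring B] [Algebra R B]
    {P : σ → FreeAlgebra R ι} (g : A →ₐ[R] B) (h : IsSolvableIn A P) : IsSolvableIn B P := by
  obtain ⟨X, hX⟩ := h
  exact ⟨g ∘ X, fun j => by rw [← FreeAlgebra.algHom_lift_apply, hX, map_zero]⟩

theorem isSolvableIn_comp_equiv {A τ : Type*} [Ring A] [Algebra R A] (P : σ → FreeAlgebra R ι)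
    (e : τ ≃ σ) : IsSolvableIn A (P ∘ e) ↔ IsSolvableIn A P := by
  refine exists_congr fun X => ⟨fun h j => ?_, fun h j => h (e j)⟩
  simpa using h (e.symm j)

end Solvability

section MatrixUnits

variable (R : Type*) [CommRing R] {n : ℕ}

def matrixUnitVar (i j : Fin n) : FreeAlgebra R (Fin (n * n)) :=
  FreeAlgebra.ι R (finProdFinEquiv (i, j))

def matrixUnitRelations (n : ℕ) :
    (Fin n × Fin n) × (Fin n × Fin n) ⊕ Unit → FreeAlgebra R (Fin (n * n))
  | .inl ((i, j), (k, l)) =>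
      matrixUnitVar R i j * matrixUnitVar R k l - if j = k then matrixUnitVar R i l else 0
  | .inr () => ∑ i, matrixUnitVar R i i - 1

variable {R}

@[simp]
theorem lift_matrixUnitVar {A : Type*} [Semiring A] [Algebra R A] (X : Fin (n * n) → A)
    (i j : Fin n) : FreeAlgebra.lift R X (matrixUnitVar R i j) = X (finProdFinEquiv (i, j)) :=
  FreeAlgebra.lift_ι_apply X _

theorem lift_matrixUnitRelations_eq_zero_iff {A : Type*} [Ring A] [Algebra R A]
    (X : Fin (n * n) → A) :
    (∀ r, FreeAlgebra.lift R X (matrixUnitRelations R n r) = 0) ↔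
      (∀ i j k l, X (finProdFinEquiv (i, j)) * X (finProdFinEquiv (k, l)) =
          if j = k then X (finProdFinEquiv (i, l)) else 0) ∧
        ∑ i, X (finProdFinEquiv (i, i)) = 1 := by
  simp only [Sum.forall, Prod.forall, matrixUnitRelations, map_sub, map_mul, map_sum, map_one,
    lift_matrixUnitVar, apply_ite (FreeAlgebra.lift R X), map_zero, sub_eq_zero]
  exact and_congr Iff.rfl ⟨fun h => h (), fun h _ => h⟩

theorem isSolvableIn_matrixUnitRelations :
    IsSolvableIn (Matrix (Fin n) (Fin n) R) (matrixUnitRelations R n) := by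
  refine ⟨fun a => single (finProdFinEquiv.symm a).1 (finProdFinEquiv.symm a).2 1,
    (lift_matrixUnitRelations_eq_zero_iff _).2 ⟨fun i j k l => ?_, ?_⟩⟩
  · split_ifs with hjk <;> simp [hjk]
  · simpa using sum_single_one

end MatrixUnits

theorem Matrix.card_dvd_trace_sum_of_mul_eq {R ι m : Type*} [CommRing R] [Fintype ι] [Fintype m]
    (F : ι → ι → Matrix m m R) (hF : ∀ i j, F i j * F j i = F i i) :
    (Fintype.card ι : R) ∣ trace (∑ i, F i i) := by
  have htrace : ∀ i j, trace (F i i) = trace (F j j) := fun i j => by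
    rw [← hF i j, trace_mul_comm, hF]
  rcases isEmpty_or_nonempty ι with hι | ⟨⟨i₀⟩⟩
  · simp
  · rw [trace_sum, Finset.sum_congr rfl fun i _ => htrace i i₀, Finset.sum_const,
      Finset.card_univ, nsmul_eq_mul]
    exact dvd_mul_right _ _

def Matrix.blockDiagonalConstRingHom (α : Type*) [Semiring α] (n q : ℕ) :
    Matrix (Fin n) (Fin n) α →+* Matrix (Fin (n * q)) (Fin (n * q)) α :=
  (reindexAlgEquiv ℕ α finProdFinEquiv).toRingHom.comp
    ((blockDiagonalRingHom (Fin n) (Fin q) α).comp (Pi.constRingHom (Fin q) _))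

theorem stmt6_general (n m : ℕ) :
    (∀ (k s : ℕ) (P : Fin s → FreeAlgebra ℤ (Fin k)),
      (∃ X : Fin k → Matrix (Fin n) (Fin n) ℤ,
        ∀ j : Fin s, FreeAlgebra.lift ℤ X (P j) = 0) →
      (∃ Y : Fin k → Matrix (Fin m) (Fin m) ℤ,
        ∀ j : Fin s, FreeAlgebra.lift ℤ Y (P j) = 0))
    ↔ n ∣ m := by
  constructor
  · intro h
    let e := (Fintype.equivFin ((Fin n × Fin n) × (Fin n × Fin n) ⊕ Unit)).symm
    obtain ⟨Y, hY⟩ := (isSolvableIn_comp_equiv _ e).1 <| h _ _ _ <|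
      (isSolvableIn_comp_equiv _ e).2 (isSolvableIn_matrixUnitRelations (R := ℤ))
    obtain ⟨hmul, hsum⟩ := (lift_matrixUnitRelations_eq_zero_iff Y).1 hY
    have hdvd := card_dvd_trace_sum_of_mul_eq (fun i j => Y (finProdFinEquiv (i, j)))
      fun i j => by simp [hmul]
    rw [hsum, trace_one, Fintype.card_fin, Fintype.card_fin] at hdvd
    exact_mod_cast hdvd
  · rintro ⟨q, rfl⟩ k s P hX
    exact IsSolvableIn.map (blockDiagonalConstRingHom ℤ n q).toIntAlgHom hX

/-- For `n, m ≥ 1`: every finite system of non-commutative polynomial equations with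
integer coefficients solvable in `M_n(ℤ)` is also solvable in `M_m(ℤ)` if and only if
`n ∣ m`. A system is a finite family `P : Fin s → FreeAlgebra ℤ (Fin k)`, solvable when
all `P j` evaluate to the zero matrix at some common tuple. -/
theorem stmt6 (n m : ℕ) (hn : 1 ≤ n) (hm : 1 ≤ m) :
    (∀ (k s : ℕ) (P : Fin s → FreeAlgebra ℤ (Fin k)),
      (∃ X : Fin k → Matrix (Fin n) (Fin n) ℤ,
        ∀ j : Fin s, FreeAlgebra.lift ℤ X (P j) = 0) →
      (∃ Y : Fin k → Matrix (Fin m) (Fin m) ℤ,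
        ∀ j : Fin s, FreeAlgebra.lift ℤ Y (P j) = 0))
    ↔ n ∣ m :=
  stmt6_general n m
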